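/- arXiv:1807.11405 — 2 statements merged into one kernel-verified Lean document; each statement's English description precedes it below -/
import Mathlib

section
/- Let f : G → K be a group homomorphism and N a perfect subgroup of G. Then the normal closure in K of the image f(N) is a perfect subgroup of K. -/
/-- A subgroup `H` of a group is *perfect* if it equals its own commutator
subgroup `⁅H, H⁆`. -/
def Subgroup.IsPerfect {G : Type*} [Group G] (H : Subgroup G) : Prop :=
  H = ⁅H, H⁆

namespace Subgroup.IsPerfect

variable {G K : Type*} [Group G] [Group K]

theorem le_commutator_of_le {H M : Subgroup G} (hH : H.IsPerfect) (hHM : H ≤ M) :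
    H ≤ ⁅M, M⁆ :=
  hH.le.trans (commutator_mono hHM hHM)

theorem map {H : Subgroup G} (hH : H.IsPerfect) (f : G →* K) : (H.map f).IsPerfect := by
  rw [IsPerfect, ← map_commutator, ← hH]

theorem normalClosure {H : Subgroup G} (hH : H.IsPerfect) :
    (Subgroup.normalClosure (H : Set G)).IsPerfect :=
  le_antisymm
    (normalClosure_le_normal (hH.le_commutator_of_le subset_normalClosure))
    (commutator_le_left _ _)

end Subgroup.IsPerfect

/-- If `f : G → K` is a group homomorphism and `N` is a perfect subgroup of
`G`, then the normal closure in `K` of the image `f(N)` is a perfect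
subgroup of `K`. -/
theorem normalClosure_map_isPerfect {G K : Type*} [Group G] [Group K]
    (f : G →* K) (N : Subgroup G) (hN : N.IsPerfect) :
    (Subgroup.normalClosure ((N.map f : Subgroup K) : Set K)).IsPerfect :=
  (hN.map f).normalClosure
end

section
/- An inverse sequence of groups (Gₙ, gₙ) is stable if and only if there exists a strictly increasing function φ : ℕ → ℕ such that, writing λₖ : G_{φ(k)} → G_{φ(k-1)} for the composite bonding homomorphism (k ≥ 1), for every k ≥ 1 the composite bonding homomorphism G_{φ(k+1)} → G_{φ(k)} restricts to an isomorphism from the image of λ_{k+1} onto the image of λₖ. -/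
universe u

/-- Given an inverse sequence of groups `(Gₙ, gₙ)` (with bonding homomorphisms
`gₙ : Gₙ₊₁ →* Gₙ`), the composite bonding homomorphism `Gₙ →* Gₘ` for `m ≤ n`,
i.e. `gₘ ∘ gₘ₊₁ ∘ ⋯ ∘ gₙ₋₁` (the identity when `m = n`). -/
def bondingComp {G : ℕ → Type*} [∀ n, Group (G n)] (g : ∀ n, G (n + 1) →* G n)
    (m n : ℕ) (h : m ≤ n) : G n →* G m :=
  Nat.leRecOn h (fun {k} ih => ih.comp (g k)) (MonoidHom.id (G m))

/-- Two inverse sequences of groups are *pro-isomorphic* if there exist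
strictly increasing `i j : ℕ → ℕ` and homomorphisms `dₖ : B (j k) →* A (i k)`
and `uₖ : A (i (k+1)) →* B (j k)` such that `dₖ ∘ uₖ` is the composite bonding
homomorphism `A (i (k+1)) →* A (i k)` and `uₖ ∘ dₖ₊₁` is the composite bonding
homomorphism `B (j (k+1)) →* B (j k)`. -/
def ProIsomorphic (A : ℕ → Type*) [∀ n, Group (A n)] (a : ∀ n, A (n + 1) →* A n)
    (B : ℕ → Type*) [∀ n, Group (B n)] (b : ∀ n, B (n + 1) →* B n) : Prop :=
  ∃ (i j : ℕ → ℕ) (hi : StrictMono i) (hj : StrictMono j)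
    (d : ∀ k, B (j k) →* A (i k)) (u : ∀ k, A (i (k + 1)) →* B (j k)),
    (∀ k, (d k).comp (u k) = bondingComp a (i k) (i (k + 1)) (hi (Nat.lt_succ_self k)).le) ∧
    (∀ k, (u k).comp (d (k + 1)) = bondingComp b (j k) (j (k + 1)) (hj (Nat.lt_succ_self k)).le)

/-- An inverse sequence of groups is *stable* if it is pro-isomorphic to a
constant inverse sequence `C ← C ← C ← ⋯` in which every bonding map is the
identity homomorphism of a fixed group `C`. -/
def Stable (G : ℕ → Type u) [∀ n, Group (G n)] (g : ∀ n, G (n + 1) →* G n) : Prop :=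
  ∃ (C : Type u) (inst : Group C),
    letI := inst
    ProIsomorphic G g (fun _ => C) (fun _ => MonoidHom.id C)

/-!
Stability means that, along some subsequence, each bonding map factors as `dₖ ∘ uₖ` through a
fixed group `C` with `uₖ ∘ dₖ₊₁ = id`. Given such a factorization, `uₖ` is onto and `dₖ₊₁` is
one-to-one, so the image of the `k`-th bonding map is the image of `dₖ`, and on these images the
bonding maps become the bijections `dₖ₊₂ c ↦ dₖ₊₁ c`. Conversely, if the bonding maps restrict
to isomorphisms of the images, composing the inverses of these isomorphisms identifies every image
with the first one, `C`, and the corestricted bonding maps followed by these identifications give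
the factorization.
-/

theorem Set.bijOn_range_of_comp_eq {α β γ : Type*} {f : β → α} {d' : γ → β} {d : γ → α}
    (hd : Function.Injective d) (h : f ∘ d' = d) : Set.BijOn f (Set.range d') (Set.range d) := by
  subst h
  simpa only [Set.range_comp] using hd.injOn_range.bijOn_image

noncomputable def MonoidHom.mulEquivOfBijOn {A B : Type*} [Group A] [Group B] (f : A →* B)
    {S : Subgroup A} {T : Subgroup B} (h : Set.BijOn f S T) : S ≃* T :=
  { h.equiv f with map_mul' := fun x y => Subtype.ext (map_mul f (x : A) y) }

section BondingComp

variable {G : ℕ → Type*} [∀ n, Group (G n)] (g : ∀ n, G (n + 1) →* G n)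

theorem bondingComp_self (m : ℕ) : bondingComp g m m le_rfl = MonoidHom.id (G m) :=
  Nat.leRecOn_self _

theorem bondingComp_succ {m n : ℕ} (h : m ≤ n) (h' : m ≤ n + 1) :
    bondingComp g m (n + 1) h' = (bondingComp g m n h).comp (g n) :=
  Nat.leRecOn_succ h _

theorem bondingComp_const_id (C : Type*) [Group C] {m n : ℕ} (h : m ≤ n) :
    bondingComp (G := fun _ => C) (fun _ => MonoidHom.id C) m n h = MonoidHom.id C := by
  induction n, h using Nat.le_induction with
  | base => exact bondingComp_self _ m
  | succ n hn ih => rw [bondingComp_succ _ hn (hn.trans n.le_succ), ih]; rfl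

def subseqBonding (φ : ℕ → ℕ) (hφ : StrictMono φ) (k : ℕ) : G (φ (k + 1)) →* G (φ k) :=
  bondingComp g (φ k) (φ (k + 1)) (hφ k.lt_succ_self).le

end BondingComp

theorem stable_iff_exists_factorization {G : ℕ → Type u} [∀ n, Group (G n)]
    (g : ∀ n, G (n + 1) →* G n) :
    Stable G g ↔ ∃ (C : Type u) (_ : Group C) (i : ℕ → ℕ) (hi : StrictMono i)
      (d : ∀ k, C →* G (i k)) (u : ∀ k, G (i (k + 1)) →* C),
      (∀ k, (d k).comp (u k) = subseqBonding g i hi k) ∧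
        ∀ k, (u k).comp (d (k + 1)) = MonoidHom.id C := by
  constructor
  · rintro ⟨C, _, i, j, hi, hj, d, u, hdu, hud⟩
    exact ⟨C, _, i, hi, d, u, hdu, fun k => (hud k).trans (bondingComp_const_id C _)⟩
  · rintro ⟨C, _, i, hi, d, u, hdu, hud⟩
    exact ⟨C, _, i, id, hi, strictMono_id, d, u, hdu,
      fun k => (hud k).trans (bondingComp_const_id C _).symm⟩

section Factorization

variable {H : ℕ → Type*} [∀ n, Group (H n)] {f : ∀ n, H (n + 1) →* H n}

theorem bijOn_range_succ_of_factorization {C : Type*} [Group C] {d : ∀ k, C →* H k}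
    {u : ∀ k, H (k + 1) →* C} (hdu : ∀ k, (d k).comp (u k) = f k)
    (hud : ∀ k, (u k).comp (d (k + 1)) = MonoidHom.id C) (k : ℕ) :
    Set.BijOn (f (k + 1)) (f (k + 2)).range (f (k + 1)).range := by
  have hud_apply (k : ℕ) (c : C) : u k (d (k + 1) c) = c := DFunLike.congr_fun (hud k) c
  have range_eq (k : ℕ) : ((f k).range : Set (H k)) = Set.range (d k) := by
    rw [MonoidHom.coe_range, ← hdu k, MonoidHom.coe_comp,
      Function.Surjective.range_comp fun c => ⟨d (k + 1) c, hud_apply k c⟩]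
  rw [range_eq, range_eq]
  refine Set.bijOn_range_of_comp_eq (Function.LeftInverse.injective (hud_apply k)) ?_
  funext c
  rw [Function.comp_apply, ← hdu (k + 1), MonoidHom.comp_apply, hud_apply]

variable (hbij : ∀ k, Set.BijOn (f k) (f (k + 1)).range (f k).range)
include hbij

noncomputable def rangeEquivOfBijOn : ∀ k, (f 0).range ≃* (f k).range
  | 0 => MulEquiv.refl _
  | k + 1 => (rangeEquivOfBijOn k).trans ((f k).mulEquivOfBijOn (hbij k)).symm

theorem mulEquivOfBijOn_rangeEquivOfBijOn (k : ℕ) (c : (f 0).range) :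
    (f k).mulEquivOfBijOn (hbij k) (rangeEquivOfBijOn hbij (k + 1) c) =
      rangeEquivOfBijOn hbij k c := by
  simp [rangeEquivOfBijOn]

theorem exists_factorization_of_bijOn :
    ∃ (d : ∀ k, (f 0).range →* H (k + 1)) (u : ∀ k, H (k + 2) →* (f 0).range),
      (∀ k, (d k).comp (u k) = f (k + 1)) ∧ ∀ k, (u k).comp (d (k + 1)) = MonoidHom.id _ := by
  set e := rangeEquivOfBijOn hbij
  refine ⟨fun k => (f (k + 1)).range.subtype.comp (e (k + 1)).toMonoidHom,
    fun k => (e (k + 1)).symm.toMonoidHom.comp (f (k + 1)).rangeRestrict, fun k => ?_, fun k => ?_⟩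
  · ext x
    simp
  · ext c
    have rangeRestrict_eq : (f (k + 1)).rangeRestrict (e (k + 2) c) =
        (f (k + 1)).mulEquivOfBijOn (hbij (k + 1)) (e (k + 2) c) := rfl
    simp [rangeRestrict_eq, e, mulEquivOfBijOn_rangeEquivOfBijOn]

end Factorization

/-- An inverse sequence of groups `(Gₙ, gₙ)` is stable iff there is a strictly
increasing `φ : ℕ → ℕ` such that, with `λₖ : G (φ k) →* G (φ (k-1))` the
composite bonding homomorphisms (`k ≥ 1`), for every `k ≥ 1` the composite
bonding homomorphism restricts to an isomorphism from the image of `λₖ₊₁`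
onto the image of `λₖ`. -/
theorem stable_iff_images_stabilize {G : ℕ → Type u} [∀ n, Group (G n)]
    (g : ∀ n, G (n + 1) →* G n) :
    Stable G g ↔
      ∃ (φ : ℕ → ℕ) (hφ : StrictMono φ),
        ∀ k : ℕ,
          Set.BijOn (bondingComp g (φ k) (φ (k + 1)) (hφ (Nat.lt_succ_self k)).le)
            ((bondingComp g (φ (k + 1)) (φ (k + 2)) (hφ (Nat.lt_succ_self (k + 1))).le).range :
              Set (G (φ (k + 1))))
            ((bondingComp g (φ k) (φ (k + 1)) (hφ (Nat.lt_succ_self k)).le).range :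
              Set (G (φ k))) := by
  rw [stable_iff_exists_factorization]
  constructor
  · rintro ⟨C, _, i, hi, d, u, hdu, hud⟩
    exact ⟨fun k => i (k + 1), hi.comp (strictMono_id.add_const 1),
      bijOn_range_succ_of_factorization (H := fun k => G (i k)) (f := subseqBonding g i hi)
        hdu hud⟩
  · rintro ⟨φ, hφ, hbij⟩
    obtain ⟨d, u, hdu, hud⟩ :=
      exists_factorization_of_bijOn (H := fun k => G (φ k)) (f := subseqBonding g φ hφ) hbij
    exact ⟨_, _, fun k => φ (k + 1), hφ.comp (strictMono_id.add_const 1), d, u, hdu, hud⟩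
end
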